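/- Let r be an integer with r ≥ 4 and define ρ_r by ρ_r(0) = 0 and the recurrence ρ_r(n+1) = r/(r − ρ_r(n)). Then the multisets (n₁,…,n_s) of positive integers with ρ_r(n₁)+⋯+ρ_r(n_s) = r are exactly: (1 repeated r times), (2 repeated r−1 times), (1 together with 3 repeated r−2 times), and (1, 2 together with 5 repeated r−3 times). -/

import Mathlib

/-!
`ρ_r` is strictly increasing with `ρ_r(1) = 1`, and since `t ↦ r / (r - t)` is increasing,
`ρ_r` stays below every `C < r` with `r ≤ C (r - C)`; `rhoBound r` is such a `C`, barely above
the limit of `ρ_r`. As all terms lie in `[1, C)`, a solution has `r` or `r - 1` parts. With `r`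
parts all are `1`. With `r - 1` parts the excesses `ρ_r(n) - 1` add up to `1`, which allows at
most one part `1`; the other parts then average `ρ_r(2)` or `ρ_r(3)`. A part below the average
must be balanced by parts above it, each exceeding it by less than `C - ρ_r(k + 1)`, and this is
too little except in the listed configurations (the last one by the same argument around
`ρ_r(5)`).
-/

namespace Multiset

lemma sum_map_lt_card_mul {α : Type*} {s : Multiset α} {f : α → ℝ} {C : ℝ} (hs : s ≠ 0)
    (h : ∀ x ∈ s, f x < C) : (s.map f).sum < card s * C := by
  simpa using sum_lt_sum_of_nonempty hs h

lemma filter_le_eq_replicate_add_filter_lt (s : Multiset ℕ) (k : ℕ) :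
    s.filter (k ≤ ·) = replicate (count k s) k + s.filter (k < ·) := by
  rw [← filter_eq', ← filter_add_not (· = k) (s.filter (k ≤ ·)), filter_filter, filter_filter]
  congr 1 <;> congr 1 <;> ext n <;> omega

lemma eq_replicate_add_filter_lt {s : Multiset ℕ} {k : ℕ} (hk : ∀ n ∈ s, k ≤ n) :
    s = replicate (count k s) k + s.filter (k < ·) := by
  rw [← filter_le_eq_replicate_add_filter_lt, filter_eq_self.2 hk]

lemma eq_replicate_add_replicate_add_filter_lt {s : Multiset ℕ} {k : ℕ} (hk : ∀ n ∈ s, k ≤ n) :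
    s = replicate (count k s) k + replicate (count (k + 1) s) (k + 1) + s.filter (k + 1 < ·) := by
  have h := eq_replicate_add_filter_lt (s := s.filter (k < ·)) (k := k + 1)
    fun n hn ↦ (mem_filter.1 hn).2
  rw [count_filter_of_pos (by omega), filter_filter,
    filter_congr (p := fun n ↦ k + 1 < n ∧ k < n) (q := (k + 1 < ·)) fun n _ ↦ by omega] at h
  rw [add_assoc, ← h]
  exact eq_replicate_add_filter_lt hk

lemma eq_replicate_of_sum_map_eq {f : ℕ → ℝ} (hf : StrictMono f) {s : Multiset ℕ} {k : ℕ}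
    (hk : ∀ n ∈ s, k ≤ n) (hs : (s.map f).sum = card s * f k) : s = replicate (card s) k := by
  refine eq_replicate.2 ⟨rfl, fun n hn ↦ ?_⟩
  by_contra hne
  have : (s.map fun _ ↦ f k).sum < (s.map f).sum :=
    sum_lt_sum (fun m hm ↦ hf.monotone (hk m hm))
      ⟨n, hn, hf (lt_of_le_of_ne (hk n hn) (Ne.symm hne))⟩
  simp [hs] at this

/-- The parts equal to `k` fall short of the average `f (k + 1)`; only the parts above `k + 1`
can make up for it. -/
lemma eq_replicate_or_count_mul_sub_lt {f : ℕ → ℝ} (hf : StrictMono f) {C : ℝ}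
    (hC : ∀ n, f n < C) {s : Multiset ℕ} {k : ℕ} (hk : ∀ n ∈ s, k ≤ n)
    (hs : (s.map f).sum = card s * f (k + 1)) :
    s = replicate (card s) (k + 1) ∨ 0 < count k s ∧
      count k s * (f (k + 1) - f k) < card (s.filter (k + 1 < ·)) * (C - f (k + 1)) := by
  rcases (count k s).eq_zero_or_pos with hb | hb
  · refine .inl (eq_replicate_of_sum_map_eq hf (fun n hn ↦ ?_) hs)
    exact lt_of_le_of_ne (hk n hn) fun h ↦ count_eq_zero.1 hb (h ▸ hn)
  refine .inr ⟨hb, ?_⟩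
  set Q := s.filter (k + 1 < ·)
  have hQ : (Q.map f).sum = card Q * f (k + 1) + count k s * (f (k + 1) - f k) := by
    rw [eq_replicate_add_replicate_add_filter_lt hk] at hs
    simp only [map_add, sum_add, card_add, map_replicate, sum_replicate, card_replicate,
      nsmul_eq_mul, Nat.cast_add] at hs
    linarith
  have hdeficit : 0 < (count k s : ℝ) * (f (k + 1) - f k) :=
    mul_pos (by exact_mod_cast hb) (sub_pos.2 (hf k.lt_succ_self))
  have hQ0 : Q ≠ 0 := by
    rintro h
    simp only [h, map_zero, sum_zero, card_zero, Nat.cast_zero, zero_mul, zero_add] at hQ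
    linarith
  linarith [sum_map_lt_card_mul hQ0 fun n _ ↦ hC n]

end Multiset

/-- The sixth iterate of `2` under `t ↦ r / (r - t)`. -/
noncomputable def rhoBound (r : ℕ) : ℝ :=
  (r - 2) * (r ^ 2 - 4 * r + 1) / (r ^ 3 - 7 * r ^ 2 + 14 * r - 7)

section RhoBound

variable {r : ℕ} (hr : 4 ≤ r)
include hr

lemma rhoBound_denom_pos : (0 : ℝ) < r ^ 3 - 7 * r ^ 2 + 14 * r - 7 := by
  have : (4 : ℝ) ≤ r := by exact_mod_cast hr
  nlinarith [sq_nonneg ((r : ℝ) - 4)]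

lemma rhoBound_mul_denom :
    rhoBound r * (r ^ 3 - 7 * r ^ 2 + 14 * r - 7) = (r - 2) * (r ^ 2 - 4 * r + 1) :=
  div_mul_cancel₀ _ (rhoBound_denom_pos hr).ne'

lemma one_lt_rhoBound : 1 < rhoBound r := by
  have : (4 : ℝ) ≤ r := by exact_mod_cast hr
  rw [rhoBound, one_lt_div (rhoBound_denom_pos hr)]
  nlinarith

lemma rhoBound_lt : rhoBound r < r := by
  have : (4 : ℝ) ≤ r := by exact_mod_cast hr
  rw [rhoBound, div_lt_iff₀ (rhoBound_denom_pos hr)]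
  nlinarith [sq_nonneg ((r : ℝ) - 4)]

lemma le_rhoBound_mul_sub_rhoBound : (r : ℝ) ≤ rhoBound r * (r - rhoBound r) := by
  have : (4 : ℝ) ≤ r := by exact_mod_cast hr
  set D : ℝ := r ^ 3 - 7 * r ^ 2 + 14 * r - 7
  have key : (rhoBound r * (r - rhoBound r) - r) * D ^ 2 = r - 4 := by
    linear_combination (r * D - rhoBound r * D - (r - 2) * (r ^ 2 - 4 * r + 1)) *
      rhoBound_mul_denom hr
  exact sub_nonneg.1 (le_of_mul_le_mul_right (by rw [zero_mul, key]; linarith)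
    (pow_pos (rhoBound_denom_pos hr) 2))

lemma sub_two_mul_rhoBound_le : ((r : ℝ) - 2) * rhoBound r ≤ r := by
  have : (4 : ℝ) ≤ r := by exact_mod_cast hr
  rw [rhoBound, mul_div_assoc', div_le_iff₀ (rhoBound_denom_pos hr)]
  nlinarith [sq_nonneg ((r : ℝ) - 4)]

lemma sub_three_mul_rhoBound_sub_one_le : ((r : ℝ) - 3) * (rhoBound r - 1) ≤ 1 := by
  have : (4 : ℝ) ≤ r := by exact_mod_cast hr
  have hD := rhoBound_denom_pos hr
  rw [rhoBound, div_sub_one hD.ne', mul_div_assoc', div_le_one hD]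
  nlinarith [sq_nonneg ((r : ℝ) - 4)]

end RhoBound

section Rho

open Multiset

variable {r : ℕ} {rho : ℕ → ℝ} (hrho0 : rho 0 = 0)
  (hrho : ∀ n : ℕ, rho (n + 1) = (r : ℝ) / ((r : ℝ) - rho n))
include hrho0 hrho

lemma rho_lt_of_le_mul_sub {C : ℝ} (hC : 0 < C) (hCr : C < r) (hfix : (r : ℝ) ≤ C * (r - C))
    (n : ℕ) : rho n < C := by
  induction n with
  | zero => rwa [hrho0]
  | succ n ih =>
    have hr : (0 : ℝ) < r := by nlinarith
    calc rho (n + 1) = r / (r - rho n) := hrho n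
      _ < r / (r - C) := div_lt_div_of_pos_left hr (by linarith) (by linarith)
      _ ≤ C := by rwa [div_le_iff₀ (by linarith)]

lemma rho_one (hr : r ≠ 0) : rho 1 = 1 := by
  rw [hrho, hrho0, sub_zero, div_self (by exact_mod_cast hr)]

variable (hr : 4 ≤ r)
include hr

lemma rho_lt_two (n : ℕ) : rho n < 2 := by
  have : (4 : ℝ) ≤ r := by exact_mod_cast hr
  exact rho_lt_of_le_mul_sub hrho0 hrho two_pos (by linarith) (by linarith) n

lemma rho_lt_rhoBound (n : ℕ) : rho n < rhoBound r :=
  rho_lt_of_le_mul_sub hrho0 hrho (one_pos.trans (one_lt_rhoBound hr)) (rhoBound_lt hr)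
    (le_rhoBound_mul_sub_rhoBound hr) n

lemma rho_strictMono : StrictMono rho := by
  have : (4 : ℝ) ≤ r := by exact_mod_cast hr
  refine strictMono_nat_of_lt_succ fun n ↦ ?_
  induction n with
  | zero => rw [hrho0, rho_one hrho0 hrho (by omega)]; exact one_pos
  | succ n ih =>
    have := rho_lt_two hrho0 hrho hr (n + 1)
    calc rho (n + 1) = r / (r - rho n) := hrho n
      _ < r / (r - rho (n + 1)) :=
        div_lt_div_of_pos_left (by linarith) (by linarith) (by linarith)
      _ = rho (n + 2) := (hrho _).symm

lemma sub_rho_mul_rho_succ (n : ℕ) : (r - rho n) * rho (n + 1) = r := by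
  have : (4 : ℝ) ≤ r := by exact_mod_cast hr
  rw [hrho, mul_div_cancel₀ _ (by linarith [rho_lt_two hrho0 hrho hr n])]

lemma rho_two : ((r : ℝ) - 1) * rho 2 = r := by
  simpa [rho_one hrho0 hrho (by omega : r ≠ 0)] using sub_rho_mul_rho_succ hrho0 hrho hr 1

lemma rho_three : ((r : ℝ) - 2) * rho 3 = r - 1 := by
  have : (4 : ℝ) ≤ r := by exact_mod_cast hr
  refine mul_left_cancel₀ (by linarith : (r : ℝ) ≠ 0) ?_
  linear_combination ((r : ℝ) - 1) * sub_rho_mul_rho_succ hrho0 hrho hr 2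
    + rho 3 * rho_two hrho0 hrho hr

lemma rho_four : ((r : ℝ) ^ 2 - 3 * r + 1) * rho 4 = r * (r - 2) := by
  linear_combination ((r : ℝ) - 2) * sub_rho_mul_rho_succ hrho0 hrho hr 3
    + rho 4 * rho_three hrho0 hrho hr

lemma rho_five : ((r : ℝ) - 1) * (r - 3) * rho 5 = r ^ 2 - 3 * r + 1 := by
  have : (4 : ℝ) ≤ r := by exact_mod_cast hr
  refine mul_left_cancel₀ (by linarith : (r : ℝ) ≠ 0) ?_
  linear_combination ((r : ℝ) ^ 2 - 3 * r + 1) * sub_rho_mul_rho_succ hrho0 hrho hr 4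
    + rho 5 * rho_four hrho0 hrho hr

lemma sub_three_mul_rho_five : ((r : ℝ) - 3) * rho 5 = r - 1 - rho 2 := by
  have : (4 : ℝ) ≤ r := by exact_mod_cast hr
  refine mul_left_cancel₀ (by linarith : (r : ℝ) - 1 ≠ 0) ?_
  linear_combination rho_five hrho0 hrho hr + rho_two hrho0 hrho hr

lemma sub_four_mul_rhoBound_sub_rho_three_lt :
    ((r : ℝ) - 4) * (rhoBound r - rho 3) < rho 3 - rho 2 := by
  have : (4 : ℝ) ≤ r := by exact_mod_cast hr
  set D : ℝ := r ^ 3 - 7 * r ^ 2 + 14 * r - 7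
  have key : (((r : ℝ) - 4) * (rhoBound r - rho 3) - (rho 3 - rho 2)) * ((r - 1) * (r - 2) * D)
      = -(r ^ 2 - 5 * r + 5) := by
    linear_combination ((r : ℝ) - 4) * (r - 1) * (r - 2) * rhoBound_mul_denom hr
      - ((r : ℝ) - 3) * (r - 1) * D * rho_three hrho0 hrho hr
      + ((r : ℝ) - 2) * D * rho_two hrho0 hrho hr
  have hD := rhoBound_denom_pos hr
  have : (0 : ℝ) ≤ (r - 1) * (r - 2) := by nlinarith
  exact sub_neg.1 (neg_of_mul_neg_left (by rw [key]; nlinarith) (by positivity))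

lemma sub_four_mul_rhoBound_sub_rho_five_lt :
    ((r : ℝ) - 4) * (rhoBound r - rho 5) < rho 5 - rho 4 := by
  have : (4 : ℝ) ≤ r := by exact_mod_cast hr
  set D : ℝ := r ^ 3 - 7 * r ^ 2 + 14 * r - 7
  set q : ℝ := r ^ 2 - 3 * r + 1
  have key : (((r : ℝ) - 4) * (rhoBound r - rho 5) - (rho 5 - rho 4)) * ((r - 1) * (r - 3) * q * D)
      = 3 - r := by
    linear_combination ((r : ℝ) - 4) * (r - 1) * (r - 3) * q * rhoBound_mul_denom hr
      - ((r : ℝ) - 3) * q * D * rho_five hrho0 hrho hr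
      + ((r : ℝ) - 1) * (r - 3) * D * rho_four hrho0 hrho hr
  have hD := rhoBound_denom_pos hr
  have : (0 : ℝ) ≤ q := by nlinarith
  have : (0 : ℝ) ≤ (r - 1) * (r - 3) := by nlinarith
  exact sub_neg.1 (neg_of_mul_neg_left (by rw [key]; linarith) (by positivity))

lemma lt_card_add_two_of_sum_eq {M : Multiset ℕ} (hsum : (M.map rho).sum = r) :
    r < card M + 2 := by
  have : (4 : ℝ) ≤ r := by exact_mod_cast hr
  have hM : M ≠ 0 := by
    rintro rfl
    simp only [Multiset.map_zero, sum_zero] at hsum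
    linarith
  have hlt := sum_map_lt_card_mul hM fun n _ ↦ rho_lt_rhoBound hrho0 hrho hr n
  by_contra! hcard
  have : (card M : ℝ) + 2 ≤ r := by exact_mod_cast hcard
  nlinarith [sub_two_mul_rhoBound_le hr, one_lt_rhoBound hr]

lemma lt_card_add_three_of_sum_eq_card_add_one {N : Multiset ℕ}
    (hsum : (N.map rho).sum = card N + 1) : r < card N + 3 := by
  have hN : N ≠ 0 := by
    rintro rfl
    simp at hsum
  have hlt := sum_map_lt_card_mul hN fun n _ ↦ rho_lt_rhoBound hrho0 hrho hr n
  by_contra! hcard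
  have : (card N : ℝ) + 3 ≤ r := by exact_mod_cast hcard
  nlinarith [sub_three_mul_rhoBound_sub_one_le hr, one_lt_rhoBound hr]

lemma eq_replicate_five_of_sum_eq {Q : Multiset ℕ} (hQ : ∀ n ∈ Q, 4 ≤ n)
    (hcard : card Q = r - 3) (hsum : (Q.map rho).sum = ((r : ℝ) - 3) * rho 5) :
    Q = replicate (r - 3) 5 := by
  have hcast : (card Q : ℝ) = r - 3 := by rw [hcard, Nat.cast_sub (by omega)]; rfl
  rcases eq_replicate_or_count_mul_sub_lt (rho_strictMono hrho0 hrho hr)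
      (rho_lt_rhoBound hrho0 hrho hr) hQ (by rw [hsum, hcast]) with h | ⟨hj, hlt⟩
  · rwa [hcard] at h
  exfalso
  have hsplit := congrArg card (eq_replicate_add_replicate_add_filter_lt hQ)
  simp only [card_add, card_replicate] at hsplit
  have hV : ((card (Q.filter (4 + 1 < ·)) + 4 : ℕ) : ℝ) ≤ r := by
    exact_mod_cast (by omega : _ + 4 ≤ r)
  push_cast at hV
  have hj' : (1 : ℝ) ≤ count 4 Q := by exact_mod_cast hj
  have hδ : 0 < rho 5 - rho 4 := sub_pos.2 (rho_strictMono hrho0 hrho hr (by norm_num))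
  have hε : 0 < rhoBound r - rho 5 := sub_pos.2 (rho_lt_rhoBound hrho0 hrho hr 5)
  nlinarith [sub_four_mul_rhoBound_sub_rho_five_lt hrho0 hrho hr]

lemma eq_of_sum_eq_sub_two_mul_rho_three {N : Multiset ℕ} (hN : ∀ n ∈ N, 2 ≤ n)
    (hcard : card N = r - 2) (hsum : (N.map rho).sum = ((r : ℝ) - 2) * rho 3) :
    N = replicate (r - 2) 3 ∨ N = 2 ::ₘ replicate (r - 3) 5 := by
  have hcast : (card N : ℝ) = r - 2 := by rw [hcard, Nat.cast_sub (by omega)]; rfl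
  rcases eq_replicate_or_count_mul_sub_lt (rho_strictMono hrho0 hrho hr)
      (rho_lt_rhoBound hrho0 hrho hr) hN (by rw [hsum, hcast]) with h | ⟨hb, hlt⟩
  · exact .inl (by rwa [hcard] at h)
  right
  have hdec := eq_replicate_add_replicate_add_filter_lt hN
  have hsplit := congrArg card hdec
  simp only [card_add, card_replicate] at hsplit
  set Q := N.filter (2 + 1 < ·)
  have hQ : r - 3 ≤ card Q := by
    by_contra! hQ
    have hQ' : ((card Q + 4 : ℕ) : ℝ) ≤ r := by exact_mod_cast (by omega : _ + 4 ≤ r)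
    push_cast at hQ'
    have hb' : (1 : ℝ) ≤ count 2 N := by exact_mod_cast hb
    have hδ : 0 < rho 3 - rho 2 := sub_pos.2 (rho_strictMono hrho0 hrho hr (by norm_num))
    have hε : 0 < rhoBound r - rho 3 := sub_pos.2 (rho_lt_rhoBound hrho0 hrho hr 3)
    nlinarith [sub_four_mul_rhoBound_sub_rho_three_lt hrho0 hrho hr]
  obtain ⟨hb1, hc0⟩ : count 2 N = 1 ∧ count (2 + 1) N = 0 := by omega
  rw [hb1, hc0] at hdec
  have hQ5 : Q = replicate (r - 3) 5 := by
    refine eq_replicate_five_of_sum_eq hrho0 hrho hr (fun n hn ↦ (mem_filter.1 hn).2)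
      (by omega) ?_
    rw [hdec] at hsum
    simp only [Multiset.map_add, sum_add, map_replicate, sum_replicate, replicate_zero, one_smul,
      add_zero] at hsum
    linarith [rho_three hrho0 hrho hr, sub_three_mul_rho_five hrho0 hrho hr]
  rw [hdec, hQ5]
  rfl

lemma eq_of_sum_eq_of_card_eq_sub_one {M : Multiset ℕ} (hpos : ∀ n ∈ M, 0 < n)
    (hsum : (M.map rho).sum = r) (hcard : card M = r - 1) :
    M = replicate (r - 1) 2 ∨ M = 1 ::ₘ replicate (r - 2) 3 ∨
      M = 1 ::ₘ 2 ::ₘ replicate (r - 3) 5 := by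
  have hdec := eq_replicate_add_filter_lt (k := 1) hpos
  set N := M.filter (1 < ·)
  have hN : ∀ n ∈ N, 2 ≤ n := fun n hn ↦ (mem_filter.1 hn).2
  have hcardN := congrArg card hdec
  rw [card_add, card_replicate] at hcardN
  have hsumN : (N.map rho).sum = r - count 1 M := by
    rw [hdec, Multiset.map_add, sum_add, map_replicate, sum_replicate,
      rho_one hrho0 hrho (by omega), nsmul_one] at hsum
    linarith
  have hcast : (card N : ℝ) + count 1 M + 1 = r := by
    exact_mod_cast (by omega : card N + count 1 M + 1 = r)
  have h3 := lt_card_add_three_of_sum_eq_card_add_one hrho0 hrho hr (N := N) (by linarith)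
  obtain hone | hone : count 1 M = 0 ∨ count 1 M = 1 := by omega
  · left
    rw [hone, replicate_zero, zero_add] at hdec
    rw [hone, Nat.cast_zero] at hsumN hcast
    rw [hdec, eq_replicate_of_sum_map_eq (rho_strictMono hrho0 hrho hr) hN (by
      rw [hsumN, show (card N : ℝ) = r - 1 by linarith]
      linarith [rho_two hrho0 hrho hr])]
    congr 1
    omega
  · right
    rw [hone] at hdec hsumN hcast
    rw [hdec]
    refine (eq_of_sum_eq_sub_two_mul_rho_three hrho0 hrho hr hN (by omega) ?_).imp
      (congrArg _) (congrArg _)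
    push_cast at hsumN
    linarith [rho_three hrho0 hrho hr]

lemma eq_of_sum_map_rho_eq {M : Multiset ℕ} (hpos : ∀ n ∈ M, 0 < n)
    (hsum : (M.map rho).sum = r) :
    M = replicate r 1 ∨ M = replicate (r - 1) 2 ∨
      M = 1 ::ₘ replicate (r - 2) 3 ∨ M = 1 ::ₘ 2 ::ₘ replicate (r - 3) 5 := by
  have hmono := rho_strictMono hrho0 hrho hr
  have h1 := rho_one hrho0 hrho (by omega)
  have hle : card M ≤ r := by
    have := card_nsmul_le_sum (s := M.map rho) (a := 1) (by
      simpa only [forall_mem_map_iff, ← h1] using fun n hn ↦ hmono.monotone (hpos n hn))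
    rw [hsum, card_map, nsmul_one] at this
    exact_mod_cast this
  have hgt := lt_card_add_two_of_sum_eq hrho0 hrho hr hsum
  obtain hcard | hcard : card M = r ∨ card M = r - 1 := by omega
  · left
    rw [← hcard]
    exact eq_replicate_of_sum_map_eq hmono hpos (by rw [hsum, h1, hcard, mul_one])
  · exact .inr (eq_of_sum_eq_of_card_eq_sub_one hrho0 hrho hr hpos hsum hcard)

end Rho

theorem stmt_4 (r : ℕ) (hr : 4 ≤ r)
    (rho : ℕ → ℝ) (hrho0 : rho 0 = 0)
    (hrho : ∀ n : ℕ, rho (n + 1) = (r : ℝ) / ((r : ℝ) - rho n)) :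
    ∀ M : Multiset ℕ, (∀ n ∈ M, 0 < n) →
      ((M.map rho).sum = (r : ℝ) ↔
        M = Multiset.replicate r 1 ∨
        M = Multiset.replicate (r - 1) 2 ∨
        M = 1 ::ₘ Multiset.replicate (r - 2) 3 ∨
        M = 1 ::ₘ 2 ::ₘ Multiset.replicate (r - 3) 5) := by
  intro M hpos
  refine ⟨eq_of_sum_map_rho_eq hrho0 hrho hr hpos, ?_⟩
  rintro (rfl | rfl | rfl | rfl) <;>
    simp only [Multiset.map_replicate, Multiset.sum_replicate, Multiset.map_cons,
      Multiset.sum_cons, nsmul_eq_mul, rho_one hrho0 hrho (by omega : r ≠ 0),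
      Nat.cast_sub (by omega : 1 ≤ r), Nat.cast_sub (by omega : 2 ≤ r),
      Nat.cast_sub (by omega : 3 ≤ r), Nat.cast_one, Nat.cast_ofNat] <;>
    linarith [rho_two hrho0 hrho hr, rho_three hrho0 hrho hr, sub_three_mul_rho_five hrho0 hrho hr]
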